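/- Let j be a positive integer, let β = (s/t)·x + c where s ∈ ℤ, t is a positive integer and c ∈ F (so β ∈ F(x) ⊆ E, using ℚ ⊆ F), and suppose α = σ_x^t(γ) − γ for some γ ∈ E. Then the rational function α/(y − β)^j is (σ_x,σ_y)-summable in E(y). -/

import Mathlib

/-! With `δ = σ_x^t(γ)` and `d = s/t` we have `σ_x(β) = β + d`, so the fractions
`σ_x^k(γ)/(y - β - k d)^j` (`k ∈ ℤ`) form a `σ_x`-orbit and the fractions `δ/(y - β + i)^j`
(`i ∈ ℤ`) form a `σ_y`-orbit. Any difference of two members of an orbit is summable by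
telescoping; as `t d = s`, the first orbit gives `δ/(y - β - s)^j - γ/(y - β)^j`, the second
gives `δ/(y - β)^j - δ/(y - β - s)^j`, and their sum is `α/(y - β)^j`. -/

/-- `E`, an algebraic closure of the rational function field `F(x)`. -/
noncomputable abbrev Ebar (F : Type*) [Field F] : Type _ := AlgebraicClosure (RatFunc F)

/-- The element `x` of `F(x) ⊆ E`. -/
noncomputable abbrev Ebar.x (F : Type*) [Field F] : Ebar F :=
  algebraMap (RatFunc F) (Ebar F) RatFunc.X

/-- The embedding of a constant `a ∈ F` into `E`. -/
noncomputable abbrev Ebar.c (F : Type*) [Field F] (a : F) : Ebar F :=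
  algebraMap (RatFunc F) (Ebar F) (RatFunc.C a)


theorem AddSubgroup.sub_mem_of_forall_succ_sub_mem {G : Type*} [AddCommGroup G]
    (S : AddSubgroup G) {φ : ℤ → G} (h : ∀ i, φ (i + 1) - φ i ∈ S) (m n : ℤ) :
    φ m - φ n ∈ S := by
  suffices h₀ : ∀ m, φ m - φ 0 ∈ S by
    simpa using S.sub_mem (h₀ m) (h₀ n)
  intro m
  induction m using Int.induction_on with
  | zero => simp
  | succ i ih => simpa using S.add_mem (h i) ih
  | pred i ih => simpa using S.sub_mem ih (h (-i - 1))

theorem exists_sub_eq_map_sub_self_of_map_eq_succ {M E : Type*} [AddCommGroup M] [FunLike E M M]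
    [AddMonoidHomClass E M M] (σ : E) {φ : ℤ → M} (hφ : ∀ i, σ (φ i) = φ (i + 1)) (m n : ℤ) :
    ∃ g, φ m - φ n = σ g - g := by
  have hstep (i : ℤ) : φ (i + 1) - φ i ∈ ((σ : M →+ M) - AddMonoidHom.id M).range :=
    ⟨φ i, by simp [hφ]⟩
  obtain ⟨g, hg⟩ := AddSubgroup.sub_mem_of_forall_succ_sub_mem _ hstep m n
  exact ⟨g, by simpa using hg.symm⟩

open RatFunc

section SimpleFraction

variable {K : Type*} [Field K]

theorem RingEquiv.map_C_div_X_sub_C_pow (S : RatFunc K ≃+* RatFunc K) (σ : K → K)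
    (hC : ∀ a, S (C a) = C (σ a)) (hX : S X = X) (a b : K) (j : ℕ) :
    S (C a / (X - C b) ^ j) = C (σ a) / (X - C (σ b)) ^ j := by
  simp only [map_div₀, map_pow, map_sub, hC, hX]

theorem AlgEquiv.map_C_div_X_sub_C_pow (S : RatFunc K ≃ₐ[K] RatFunc K) (hX : S X = X + 1)
    (a b : K) (j : ℕ) :
    S (C a / (X - C b) ^ j) = C a / (X - C (b - 1)) ^ j := by
  simp only [map_div₀, map_pow, map_sub, hX, ← algebraMap_eq_C, AlgEquiv.commutes, map_one]
  ring

end SimpleFraction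

theorem simple_fraction_shift_summable_general
    (F : Type*) [Field F] [CharZero F]
    (σx : Ebar F ≃+* Ebar F)
    (hσxF : ∀ a : F, σx (Ebar.c F a) = Ebar.c F a)
    (hσxx : σx (Ebar.x F) = Ebar.x F + 1)
    (Sx : RatFunc (Ebar F) ≃+* RatFunc (Ebar F))
    (hSxC : ∀ a : Ebar F, Sx (RatFunc.C a) = RatFunc.C (σx a))
    (hSxX : Sx RatFunc.X = RatFunc.X)
    (σy : RatFunc (Ebar F) ≃ₐ[Ebar F] RatFunc (Ebar F))
    (hσy : σy RatFunc.X = RatFunc.X + 1)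
    (j : ℕ) (s : ℤ) (t : ℕ) (ht : 0 < t) (c : F)
    (β α : Ebar F)
    (hβ : β = ((s : Ebar F) / (t : Ebar F)) * Ebar.x F + Ebar.c F c)
    (hα : ∃ γ : Ebar F, α = (σx ^ t) γ - γ) :
    ∃ g h : RatFunc (Ebar F),
      RatFunc.C α / (RatFunc.X - RatFunc.C β) ^ j = Sx g - g + σy h - h := by
  obtain ⟨γ, rfl⟩ := hα
  set d : Ebar F := s / t with hd
  have hσd : σx d = d := by simp only [hd, map_div₀, map_intCast, map_natCast]
  have hσβ : σx β = β + d := by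
    rw [hβ, map_add, map_mul, hσd, hσxx, hσxF]
    ring
  have htd : (t : Ebar F) * d = s := mul_div_cancel₀ _ (Nat.cast_ne_zero.mpr ht.ne')
  obtain ⟨g, hg⟩ := exists_sub_eq_map_sub_self_of_map_eq_succ Sx
    (φ := fun k : ℤ => C ((σx ^ k) γ) / (X - C (β + k * d)) ^ j) (fun k => by
      have hk : (σx ^ (k + 1)) γ = σx ((σx ^ k) γ) := by rw [add_comm, zpow_one_add]; rfl
      rw [Sx.map_C_div_X_sub_C_pow σx hSxC hSxX, hk, map_add, map_mul, map_intCast, hσβ, hσd]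
      push_cast
      ring_nf) t 0
  obtain ⟨h, hh⟩ := exists_sub_eq_map_sub_self_of_map_eq_succ σy
    (φ := fun i : ℤ => C ((σx ^ t) γ) / (X - C (β - i)) ^ j) (fun i => by
      rw [σy.map_C_div_X_sub_C_pow hσy]
      push_cast
      ring_nf) 0 (-s)
  refine ⟨g, h, ?_⟩
  simp only [zpow_natCast, Int.cast_natCast, htd, Int.cast_zero, zero_mul, add_zero, zpow_zero,
    RingAut.one_apply, sub_zero, Int.cast_neg, sub_neg_eq_add] at hg hh
  rw [add_sub_assoc, ← hg, ← hh, map_sub, sub_div]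
  ring

/-- Let `F` be an algebraically closed field of characteristic zero, `E` the algebraic
closure of `F(x)`, `σ_x` an automorphism of `E` fixing `F` with `σ_x(x) = x + 1`,
extended coefficientwise to `E(y)` (denoted `Sx`), and `σ_y` the `E`-automorphism of
`E(y)` with `σ_y(y) = y + 1`.  If `β = (s/t)·x + c` with `s ∈ ℤ`, `t` a positive
integer, `c ∈ F`, and `α = σ_x^t(γ) - γ` for some `γ ∈ E`, then for every positive
integer `j` the rational function `α/(y - β)^j` is `(σ_x,σ_y)`-summable in `E(y)`. -/
theorem simple_fraction_shift_summable
    (F : Type*) [Field F] [IsAlgClosed F] [CharZero F]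
    (σx : Ebar F ≃+* Ebar F)
    (hσxF : ∀ a : F, σx (Ebar.c F a) = Ebar.c F a)
    (hσxx : σx (Ebar.x F) = Ebar.x F + 1)
    (Sx : RatFunc (Ebar F) ≃+* RatFunc (Ebar F))
    (hSxC : ∀ a : Ebar F, Sx (RatFunc.C a) = RatFunc.C (σx a))
    (hSxX : Sx RatFunc.X = RatFunc.X)
    (σy : RatFunc (Ebar F) ≃ₐ[Ebar F] RatFunc (Ebar F))
    (hσy : σy RatFunc.X = RatFunc.X + 1)
    (j : ℕ) (hj : 0 < j) (s : ℤ) (t : ℕ) (ht : 0 < t) (c : F)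
    (β α : Ebar F)
    (hβ : β = ((s : Ebar F) / (t : Ebar F)) * Ebar.x F + Ebar.c F c)
    (hα : ∃ γ : Ebar F, α = (σx ^ t) γ - γ) :
    ∃ g h : RatFunc (Ebar F),
      RatFunc.C α / (RatFunc.X - RatFunc.C β) ^ j = Sx g - g + σy h - h :=
  simple_fraction_shift_summable_general F σx hσxF hσxx Sx hSxC hSxX σy hσy j s t ht c β α hβ hα
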